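/- arXiv:2008.03031 — 2 statements merged into one kernel-verified Lean document; each statement's English description precedes it below -/
import Mathlib

section
/- Every subdivision of a wheel with an r-explicit generating set is an r-local subdivision of a wheel; that is, if either all pieces of the subdivision have length at most r, or all pieces except one have length at most r and the rim has length at most r, then the cycles of length at most r generate all cycles of the subdivision. -/
/-!
Common definitions: weighted graphs, weighted lengths of walks, 𝔽₂-generation of cycles,
subdivisions of wheels (with pieces and rim), theta graphs, the classes 𝒲 and 𝒲*,
fans and pre-fans, arcs/bridges/detours of a cycle relative to a theta graph.
-/

open SimpleGraph

namespace LocalWheels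

variable {V : Type*} [Fintype V] [DecidableEq V]

/-- The weighted length of a walk: the sum of the weights of its edges. -/
def wlen {G : SimpleGraph V} (wt : Sym2 V → ℕ) {u v : V} (p : G.Walk u v) : ℕ :=
  (p.edges.map wt).sum

/-- All edges of `G` have positive weight. -/
def WeightPos (G : SimpleGraph V) (wt : Sym2 V → ℕ) : Prop :=
  ∀ e ∈ G.edgeSet, 0 < wt e

/-- `t` is the 𝔽₂-sum (iterated symmetric difference) of finitely many members of `𝒞`. -/
def IsF2Sum (𝒞 : Set (Finset (Sym2 V))) (t : Finset (Sym2 V)) : Prop :=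
  ∃ l : List (Finset (Sym2 V)), (∀ s ∈ l, s ∈ 𝒞) ∧ l.foldr symmDiff ∅ = t

/-- The edge sets of the cycles of the subgraph with edge set `E` having weighted length
at most `r`. -/
def shortCycleEdgeSets (G : SimpleGraph V) (wt : Sym2 V → ℕ) (r : ℕ∞) (E : Set (Sym2 V)) :
    Set (Finset (Sym2 V)) :=
  {t | ∃ (v : V) (c : G.Walk v v), c.IsCycle ∧ (∀ e ∈ c.edges, e ∈ E) ∧
        (wlen wt c : ℕ∞) ≤ r ∧ c.edges.toFinset = t}

/-- Every cycle of the subgraph with edge set `E` is generated (over 𝔽₂) by the cycles of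
that subgraph of weighted length at most `r`. -/
def LocallyGenerated (G : SimpleGraph V) (wt : Sym2 V → ℕ) (r : ℕ∞) (E : Set (Sym2 V)) : Prop :=
  ∀ (v : V) (c : G.Walk v v), c.IsCycle → (∀ e ∈ c.edges, e ∈ E) →
    IsF2Sum (shortCycleEdgeSets G wt r E) c.edges.toFinset

/-- A subdivision of a wheel inside the graph `G`: a center, `n ≥ 3` branch vertices on the
rim, internally disjoint spoke paths from the center to the branch vertices and internally
disjoint rim arcs joining consecutive branch vertices. -/
structure WheelSubdiv (G : SimpleGraph V) where
  n : ℕ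
  hn : 3 ≤ n
  center : V
  branch : Fin n → V
  branch_inj : Function.Injective branch
  center_ne : ∀ i, center ≠ branch i
  spoke : (i : Fin n) → G.Walk center (branch i)
  arc : (i : Fin n) → G.Walk (branch i) (branch (finRotate n i))
  spoke_path : ∀ i, (spoke i).IsPath
  arc_path : ∀ i, (arc i).IsPath
  spoke_spoke : ∀ i j, i ≠ j →
    {x | x ∈ (spoke i).support} ∩ {x | x ∈ (spoke j).support} = {center}
  arc_arc : ∀ i j, i ≠ j →
    {x | x ∈ (arc i).support} ∩ {x | x ∈ (arc j).support} =
      ({branch i, branch (finRotate n i)} ∩ {branch j, branch (finRotate n j)} : Set V)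
  spoke_arc : ∀ i j,
    {x | x ∈ (spoke i).support} ∩ {x | x ∈ (arc j).support} =
      ({center, branch i} ∩ {branch j, branch (finRotate n j)} : Set V)

namespace WheelSubdiv

variable {G : SimpleGraph V}

/-- The vertices of the subdivision of the wheel. -/
def support (W : WheelSubdiv G) : Set V :=
  {x | ∃ i, x ∈ (W.spoke i).support ∨ x ∈ (W.arc i).support}

/-- The edges of the subdivision of the wheel. -/
def edges (W : WheelSubdiv G) : Set (Sym2 V) :=
  {e | ∃ i, e ∈ (W.spoke i).edges ∨ e ∈ (W.arc i).edges}

/-- The `i`-th piece of the subdivision of the wheel: the cycle through the center obtained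
from the `i`-th spoke, the `i`-th rim arc and the `(i+1)`-st spoke. -/
def piece (W : WheelSubdiv G) (i : Fin W.n) : G.Walk W.center W.center :=
  (W.spoke i).append ((W.arc i).append (W.spoke (finRotate W.n i)).reverse)

/-- The weighted length of the `i`-th piece. -/
def pieceLen (W : WheelSubdiv G) (wt : Sym2 V → ℕ) (i : Fin W.n) : ℕ :=
  wlen wt (W.piece i)

/-- The weighted length of the rim. -/
def rimLen (W : WheelSubdiv G) (wt : Sym2 V → ℕ) : ℕ :=
  ∑ i, wlen wt (W.arc i)

/-- The subdivision of the wheel is `r`-bounded: all pieces have length at most `r`. -/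
def RBounded (W : WheelSubdiv G) (wt : Sym2 V → ℕ) (r : ℕ∞) : Prop :=
  ∀ i, (W.pieceLen wt i : ℕ∞) ≤ r

/-- The subdivision of the wheel has an `r`-explicit generating set: all pieces have
length at most `r`, or all pieces except one have length at most `r` and the rim has
length at most `r`. -/
def RExplicit (W : WheelSubdiv G) (wt : Sym2 V → ℕ) (r : ℕ∞) : Prop :=
  (∀ i, (W.pieceLen wt i : ℕ∞) ≤ r) ∨
    ((∃ i₀, ∀ i, i ≠ i₀ → (W.pieceLen wt i : ℕ∞) ≤ r) ∧ (W.rimLen wt : ℕ∞) ≤ r)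

/-- The subdivision of the wheel is `r`-local: its cycles of length at most `r` generate
all its cycles. -/
def RLocal (W : WheelSubdiv G) (wt : Sym2 V → ℕ) (r : ℕ∞) : Prop :=
  LocallyGenerated G wt r W.edges

end WheelSubdiv

/-- A theta graph of parameter `r` inside `G`: two branching vertices joined by three
internally disjoint paths (its arms) such that at least two of the three cycles formed by
unions of pairs of arms have weighted length at most `r`. -/
structure Theta (G : SimpleGraph V) (wt : Sym2 V → ℕ) (r : ℕ∞) where
  v : V
  w : V
  hvw : v ≠ w
  arm : Fin 3 → G.Walk v w
  arm_path : ∀ i, (arm i).IsPath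
  arm_inter : ∀ i j, i ≠ j →
    {x | x ∈ (arm i).support} ∩ {x | x ∈ (arm j).support} = {v, w}
  arm_ne : ∀ i j, i ≠ j → (arm i).edges ≠ (arm j).edges
  param : ∃ i j k : Fin 3, i ≠ j ∧ i ≠ k ∧ j ≠ k ∧
    ((wlen wt (arm i) + wlen wt (arm j) : ℕ) : ℕ∞) ≤ r ∧
    ((wlen wt (arm i) + wlen wt (arm k) : ℕ) : ℕ∞) ≤ r

namespace Theta

variable {G : SimpleGraph V} {wt : Sym2 V → ℕ} {r : ℕ∞}

/-- The vertices of the theta graph. -/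
def support (θ : Theta G wt r) : Set V := {x | ∃ i, x ∈ (θ.arm i).support}

/-- The edges of the theta graph. -/
def edges (θ : Theta G wt r) : Set (Sym2 V) := {e | ∃ i, e ∈ (θ.arm i).edges}

/-- `x` is an interior vertex of the `i`-th arm. -/
def interior (θ : Theta G wt r) (i : Fin 3) (x : V) : Prop :=
  x ∈ (θ.arm i).support ∧ x ≠ θ.v ∧ x ≠ θ.w

/-- `x` is a branching vertex of the theta graph. -/
def IsBranch (θ : Theta G wt r) (x : V) : Prop := x = θ.v ∨ x = θ.w

end Theta

/-- `p` lies strictly between `x` and `y` on the path `A`. -/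
def StrictlyBetween {G : SimpleGraph V} {u₀ w₀ : V} (A : G.Walk u₀ w₀) (p x y : V)
    (hp : p ∈ A.support) : Prop :=
  p ≠ x ∧ p ≠ y ∧
    ((x ∈ (A.takeUntil p hp).support ∧ y ∈ (A.dropUntil p hp).support) ∨
     (y ∈ (A.takeUntil p hp).support ∧ x ∈ (A.dropUntil p hp).support))

/-- The subgraph of `G` with vertex set `S` and edge set `E` belongs to the class `𝒲`:
it is obtained from a theta graph of parameter `r` by attaching a path `P` at interior
vertices of two different arms, in such a way that it contains a cycle of length at most
`r` including `P`. -/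
def InW (G : SimpleGraph V) (wt : Sym2 V → ℕ) (r : ℕ∞) (S : Set V) (E : Set (Sym2 V)) :
    Prop :=
  ∃ (θ : Theta G wt r) (i j : Fin 3) (p₁ p₂ : V) (P : G.Walk p₁ p₂),
    i ≠ j ∧ θ.interior i p₁ ∧ θ.interior j p₂ ∧ P.IsPath ∧
    {x | x ∈ P.support} ∩ θ.support = {p₁, p₂} ∧
    S = θ.support ∪ {x | x ∈ P.support} ∧
    E = θ.edges ∪ {e | e ∈ P.edges} ∧
    ∃ (u : V) (c : G.Walk u u), c.IsCycle ∧ (∀ e ∈ c.edges, e ∈ E) ∧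
      ((wlen wt c : ℕ) : ℕ∞) ≤ r ∧ ∀ e ∈ P.edges, e ∈ c.edges

/-- The subgraph of `G` with vertex set `S` and edge set `E` belongs to the class `𝒲*`:
it is obtained from a theta graph of parameter `r` by attaching a path `P` at interior
vertices of two different arms and a path `Q` at a branching vertex and an interior vertex
of an arm that also contains an endvertex of `P`, that endvertex of `P` lying strictly
between the two endvertices of `Q` on that arm, in such a way that it contains a cycle of
length at most `r` including both `P` and `Q`. -/
def InWStar (G : SimpleGraph V) (wt : Sym2 V → ℕ) (r : ℕ∞) (S : Set V) (E : Set (Sym2 V)) :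
    Prop :=
  ∃ (θ : Theta G wt r) (i j : Fin 3) (p₁ p₂ : V) (P : G.Walk p₁ p₂),
    i ≠ j ∧ θ.interior i p₁ ∧ θ.interior j p₂ ∧ P.IsPath ∧
    {x | x ∈ P.support} ∩ θ.support = {p₁, p₂} ∧
    ∃ (b q : V) (k : Fin 3) (Q : G.Walk b q),
      θ.IsBranch b ∧ θ.interior k q ∧ Q.IsPath ∧
      {x | x ∈ Q.support} ∩ (θ.support ∪ {x | x ∈ P.support}) = {b, q} ∧
      (∃ (p : V) (hp : p ∈ (θ.arm k).support), (p = p₁ ∨ p = p₂) ∧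
        StrictlyBetween (θ.arm k) p b q hp) ∧
      S = θ.support ∪ {x | x ∈ P.support} ∪ {x | x ∈ Q.support} ∧
      E = θ.edges ∪ {e | e ∈ P.edges} ∪ {e | e ∈ Q.edges} ∧
      ∃ (u : V) (c : G.Walk u u), c.IsCycle ∧ (∀ e ∈ c.edges, e ∈ E) ∧
        ((wlen wt c : ℕ) : ℕ∞) ≤ r ∧ (∀ e ∈ P.edges, e ∈ c.edges) ∧
        ∀ e ∈ Q.edges, e ∈ c.edges

/-- `Q` is a subpath of the cycle `o`: a path all of whose edges are edges of `o`. -/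
def IsSubpathOf {G : SimpleGraph V} {a b u : V} (Q : G.Walk a b) (o : G.Walk u u) : Prop :=
  Q.IsPath ∧ ∀ e ∈ Q.edges, e ∈ o.edges

namespace Theta

variable {G : SimpleGraph V} {wt : Sym2 V → ℕ} {r : ℕ∞}

/-- `Q` is an arc of the cycle `o` relative to the theta graph `θ`: a nontrivial subpath
of `o` meeting `θ` exactly in its two endvertices. -/
def IsArc (θ : Theta G wt r) {u a b : V} (o : G.Walk u u) (Q : G.Walk a b) : Prop :=
  IsSubpathOf Q o ∧ 0 < Q.length ∧ a ∈ θ.support ∧ b ∈ θ.support ∧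
    ∀ x ∈ Q.support, x ≠ a → x ≠ b → x ∉ θ.support

/-- `Q` is a `θ`-bridge of `o`: an arc whose endvertices are interior vertices of two
different arms of `θ`. -/
def IsBridgeArc (θ : Theta G wt r) {u a b : V} (o : G.Walk u u) (Q : G.Walk a b) : Prop :=
  θ.IsArc o Q ∧ ∃ i j : Fin 3, i ≠ j ∧ θ.interior i a ∧ θ.interior j b

/-- `Q` is a `θ`-detour of `o`: an arc that is not a bridge. -/
def IsDetourArc (θ : Theta G wt r) {u a b : V} (o : G.Walk u u) (Q : G.Walk a b) : Prop :=
  θ.IsArc o Q ∧ ¬ ∃ i j : Fin 3, i ≠ j ∧ θ.interior i a ∧ θ.interior j b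

/-- The arc `R` is strongly adjacent to the arc `S`: some subpath `X` of `o` joins an
endvertex of `R` to an endvertex of `S`, contains no internal vertex of any arc, and the
endvertex of `R` on `X` is not a branching vertex of `θ`. -/
def StronglyAdj (θ : Theta G wt r) {u r₁ r₂ s₁ s₂ : V} (o : G.Walk u u)
    (R : G.Walk r₁ r₂) (S : G.Walk s₁ s₂) : Prop :=
  ∃ (x y : V) (X : G.Walk x y), (x = r₁ ∨ x = r₂) ∧ (y = s₁ ∨ y = s₂) ∧
    IsSubpathOf X o ∧
    (∀ z ∈ X.support, ∀ (a b : V) (Q : G.Walk a b), θ.IsArc o Q → z ∈ Q.support →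
      z = a ∨ z = b) ∧
    ¬ θ.IsBranch x ∧ R.length = R.length ∧ S.length = S.length

/-- The bridge `Q` is primary (relative to the branching vertex `vb` on `o`): it has an
endvertex `x` such that a shortest path from `x` to `vb` within the cycle `o` includes `Q`. -/
def PrimaryBridge (θ : Theta G wt r) {u a b : V} (o : G.Walk u u) (vb : V)
    (Q : G.Walk a b) : Prop :=
  ∃ x : V, (x = a ∨ x = b) ∧ ∃ S : G.Walk x vb, IsSubpathOf S o ∧
    (∀ S' : G.Walk x vb, IsSubpathOf S' o → wlen wt S ≤ wlen wt S') ∧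
    ∀ e ∈ Q.edges, e ∈ S.edges

end Theta

/-- Common data of fans and pre-fans of parameter `r` centered at `v`: a nonempty sequence
of (oriented) cycles through `v`, each of weighted length at most `r`. -/
structure FanSeq (G : SimpleGraph V) (wt : Sym2 V → ℕ) (r : ℕ∞) (v : V) where
  n : ℕ
  hn : 0 < n
  piece : Fin n → G.Walk v v
  piece_cycle : ∀ i, (piece i).IsCycle
  piece_len : ∀ i, (wlen wt (piece i) : ℕ∞) ≤ r

namespace FanSeq

variable {G : SimpleGraph V} {wt : Sym2 V → ℕ} {r : ℕ∞} {v : V}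

/-- The index of the first piece. -/
def first (F : FanSeq G wt r v) : Fin F.n := ⟨0, F.hn⟩

/-- The index of the last piece. -/
def last (F : FanSeq G wt r v) : Fin F.n := ⟨F.n - 1, Nat.sub_lt F.hn Nat.one_pos⟩

/-- The start of the pre-fan: the edge of the first cycle immediately before `v`. -/
def preStart (F : FanSeq G wt r v) : Sym2 V :=
  s((F.piece F.first).reverse.getVert 1, v)

/-- The end of the pre-fan: the edge of the last cycle immediately after `v`. -/
def preEnd (F : FanSeq G wt r v) : Sym2 V :=
  s(v, (F.piece F.last).getVert 1)

/-- The start of the fan: the first edge of the first cycle. -/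
def fanStart (F : FanSeq G wt r v) : Sym2 V :=
  s(v, (F.piece F.first).getVert 1)

/-- The end of the fan: the last edge of the last cycle. -/
def fanEnd (F : FanSeq G wt r v) : Sym2 V :=
  s((F.piece F.last).reverse.getVert 1, v)

/-- The edges of (the union of the pieces of) the fan. -/
def edges (F : FanSeq G wt r v) : Set (Sym2 V) := {e | ∃ i, e ∈ (F.piece i).edges}

/-- The pre-fan condition: the vertex just after `v` on a piece equals the vertex just
before `v` on the next piece. -/
def IsPreFan (F : FanSeq G wt r v) : Prop :=
  ∀ (i : ℕ) (h : i + 1 < F.n),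
    (F.piece ⟨i, Nat.lt_of_succ_lt h⟩).getVert 1 =
      (F.piece ⟨i + 1, h⟩).reverse.getVert 1

/-- The fan condition: pieces at distance at least two meet exactly in `v`, and each piece
has the form `v Lᵢ Mᵢ Rᵢ v` where `Rᵢ = L_{i+1}` is exactly the intersection of consecutive
pieces. -/
def IsFan (F : FanSeq G wt r v) : Prop :=
  (∀ i j : Fin F.n, 2 ≤ |((i : ℕ) : ℤ) - ((j : ℕ) : ℤ)| →
      {x | x ∈ (F.piece i).support} ∩ {x | x ∈ (F.piece j).support} = {v}) ∧
  ∀ (i : ℕ) (h : i + 1 < F.n),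
    ∃ (x : V) (hx : x ∈ (F.piece ⟨i, Nat.lt_of_succ_lt h⟩).support)
      (hx' : x ∈ (F.piece ⟨i + 1, h⟩).support),
      (F.piece ⟨i, Nat.lt_of_succ_lt h⟩).dropUntil x hx =
        ((F.piece ⟨i + 1, h⟩).takeUntil x hx').reverse ∧
      {y | y ∈ (F.piece ⟨i, Nat.lt_of_succ_lt h⟩).support} ∩
          {y | y ∈ (F.piece ⟨i + 1, h⟩).support} =
        {y | y ∈ ((F.piece ⟨i, Nat.lt_of_succ_lt h⟩).dropUntil x hx).support}

end FanSeq

end LocalWheels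

/-!
Interior vertices of spokes and arcs have degree two in the subdivision and branch vertices
degree three. So a cycle of the subdivision uses each spoke and each arc entirely or not at all,
and at the `i`-th branch vertex it uses the `i`-th spoke iff it uses exactly one of the two arcs
there. Hence the cycle is the 𝔽₂-sum of the pieces whose arcs it uses. If the one possibly long
piece is among them, the cycle is instead the sum of the rim and the unused pieces: every spoke
lies on exactly two pieces, so the sum of all pieces is the rim.
-/

namespace SimpleGraph.Walk

variable {V : Type*} {G : SimpleGraph V} {u v w : V}

lemma IsPath.start_notMem_support_tail {p : G.Walk u v} (hp : p.IsPath) : u ∉ p.support.tail := by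
  have h := hp.support_nodup
  rw [← cons_tail_support] at h
  exact (List.nodup_cons.1 h).1

lemma IsPath.append_of_mem_support {p : G.Walk u v} {q : G.Walk v w} (hp : p.IsPath)
    (hq : q.IsPath) (h : ∀ x ∈ p.support, x ∈ q.support → x = v) : (p.append q).IsPath := by
  rw [isPath_def, support_append, List.nodup_append']
  refine ⟨hp.support_nodup, hq.support_nodup.sublist q.support.tail_sublist, fun x hx hx' => ?_⟩
  exact hq.start_notMem_support_tail (h x hx (List.mem_of_mem_tail hx') ▸ hx')

lemma IsPath.isCycle_append_of_mem_support {p : G.Walk u v} {q : G.Walk v u} (hp : p.IsPath)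
    (hq : q.IsPath) (h : ∀ x ∈ p.support, x ∈ q.support → x = u ∨ x = v)
    (hlen : 1 < p.length ∨ 1 < q.length) : (p.append q).IsCycle := by
  refine hp.isCycle_append hq (fun x hx hx' => ?_) hlen
  rcases h x (List.mem_of_mem_tail hx) (List.mem_of_mem_tail hx') with rfl | rfl
  · exact hp.start_notMem_support_tail hx
  · exact hq.start_notMem_support_tail hx'

lemma notMem_edges_of_subsingleton_inter {u' v' : V} {p : G.Walk u v} {q : G.Walk u' v'}
    {e : Sym2 V} (h : ({x | x ∈ p.support} ∩ {x | x ∈ q.support}).Subsingleton)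
    (hp : e ∈ p.edges) : e ∉ q.edges := by
  induction e using Sym2.ind with
  | _ x y =>
    intro hq
    exact (p.adj_of_mem_edges hp).ne (h ⟨p.fst_mem_support_of_mem_edges hp,
      q.fst_mem_support_of_mem_edges hq⟩ ⟨p.snd_mem_support_of_mem_edges hp,
      q.snd_mem_support_of_mem_edges hq⟩)

variable [DecidableEq V]

lemma IsTrail.even_card_filter_mem_edges {c : G.Walk u u} (hc : c.IsTrail) {x : V}
    {F : Finset (Sym2 V)} (hF : ∀ e ∈ F, x ∈ e) (hcF : ∀ e ∈ c.edges, x ∈ e → e ∈ F) :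
    Even (F.filter (· ∈ c.edges)).card := by
  have hfilter : F.filter (· ∈ c.edges) = c.edges.toFinset.filter (x ∈ ·) := by
    ext e
    simp only [Finset.mem_filter, List.mem_toFinset]
    exact ⟨fun h => ⟨h.2, hF e h.1⟩, fun h => ⟨hcF e h.1 h.2, h.1⟩⟩
  rw [hfilter, hc.edges_nodup.card_eq_countP]
  simpa using hc.even_countP_edges_iff x

lemma IsTrail.mem_edges_iff_of_incident_pair {c : G.Walk u u} (hc : c.IsTrail) {x : V}
    {e₁ e₂ : Sym2 V} (hx₁ : x ∈ e₁) (hx₂ : x ∈ e₂)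
    (hcx : ∀ e ∈ c.edges, x ∈ e → e = e₁ ∨ e = e₂) : e₁ ∈ c.edges ↔ e₂ ∈ c.edges := by
  have := hc.even_card_filter_mem_edges (x := x) (F := {e₁, e₂}) (by simp [hx₁, hx₂])
    (by simpa using hcx)
  by_cases h₁ : e₁ ∈ c.edges <;> by_cases h₂ : e₂ ∈ c.edges <;>
    simp_all [Finset.filter_insert, Finset.filter_singleton]

lemma IsTrail.mem_edges_iff_xor_of_incident_triple {c : G.Walk u u} (hc : c.IsTrail) {x : V}
    {e₁ e₂ e₃ : Sym2 V} (h₁₂ : e₁ ≠ e₂) (h₁₃ : e₁ ≠ e₃) (h₂₃ : e₂ ≠ e₃)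
    (hx₁ : x ∈ e₁) (hx₂ : x ∈ e₂) (hx₃ : x ∈ e₃)
    (hcx : ∀ e ∈ c.edges, x ∈ e → e = e₁ ∨ e = e₂ ∨ e = e₃) :
    e₁ ∈ c.edges ↔ Xor (e₂ ∈ c.edges) (e₃ ∈ c.edges) := by
  have := hc.even_card_filter_mem_edges (x := x) (F := {e₁, e₂, e₃}) (by simp [hx₁, hx₂, hx₃])
    (by simpa using hcx)
  by_cases h₁ : e₁ ∈ c.edges <;> by_cases h₂ : e₂ ∈ c.edges <;> by_cases h₃ : e₃ ∈ c.edges <;>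
    simp_all [Finset.filter_insert, Finset.filter_singleton, Xor, Nat.even_iff]

lemma IsTrail.mem_edges_iff_of_isPath {c : G.Walk w w} (hc : c.IsTrail) :
    ∀ {a b : V} {p : G.Walk a b}, p.IsPath →
      (∀ x ∈ p.support, x ≠ a → x ≠ b → ∀ e ∈ c.edges, x ∈ e → e ∈ p.edges) →
      ∀ e ∈ p.edges, ∀ e' ∈ p.edges, (e ∈ c.edges ↔ e' ∈ c.edges)
  | _, _, .nil, _, _ => by simp
  | a, b, .cons (v := z) h q, hp, hint => by
    rw [cons_isPath_iff] at hp
    obtain ⟨hq, haq⟩ := hp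
    have ih := hc.mem_edges_iff_of_isPath hq fun x hx hxz hxb e he hxe => by
      have hxa : x ≠ a := fun hxa => haq (hxa ▸ hx)
      rcases List.mem_cons.1 (hint x (by simp [hx]) hxa hxb e he hxe) with rfl | h
      · rcases Sym2.mem_iff.1 hxe with h | h <;> contradiction
      · exact h
    suffices key : ∀ e ∈ q.edges, (e ∈ c.edges ↔ s(a, z) ∈ c.edges) by
      intro e he e' he'
      rw [edges_cons, List.mem_cons] at he he'
      rcases he with rfl | he <;> rcases he' with rfl | he'
      exacts [Iff.rfl, (key e' he').symm, key e he, (key e he).trans (key e' he').symm]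
    intro e he
    have hq_nil : ¬ q.Nil := edges_eq_nil.not.mp (List.ne_nil_of_mem he)
    have hzb : z ≠ b := by
      rintro rfl
      exact hq_nil (isPath_iff_nil.1 hq)
    have hsnd : s(z, q.snd) ∈ q.edges := mk_start_snd_mem_edges hq_nil
    rw [ih e he _ hsnd]
    -- `z` is interior to `p`, so the trail's only candidate edges at `z` are the two path edges
    refine (hc.mem_edges_iff_of_incident_pair (x := z) (by simp) (by simp)
      fun f hf hzf => ?_).symm
    have hza : z ≠ a := (G.ne_of_adj h).symm
    rcases List.mem_cons.1 (hint z (by simp) hza hzb f hf hzf) with rfl | hfq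
    · exact Or.inl rfl
    · obtain ⟨y, rfl⟩ := Sym2.mem_iff_exists.1 hzf
      exact Or.inr (by rw [hq.eq_snd_of_mem_edges hfq])

end SimpleGraph.Walk

lemma finRotate_ne_self {n : ℕ} (hn : 2 ≤ n) (i : Fin n) : finRotate n i ≠ i := by
  obtain ⟨m, rfl⟩ : ∃ m, n = m + 2 := ⟨n - 2, by omega⟩
  simp [finRotate_apply]

lemma finRotate_finRotate_ne_self {n : ℕ} (hn : 3 ≤ n) (i : Fin n) :
    finRotate n (finRotate n i) ≠ i := by
  obtain ⟨m, rfl⟩ : ∃ m, n = m + 3 := ⟨n - 3, by omega⟩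
  rw [finRotate_apply, finRotate_apply, add_assoc, Ne, add_eq_left, Fin.ext_iff]
  simp only [Fin.val_add, Fin.val_one, Fin.val_zero]
  rw [Nat.mod_eq_of_lt (by omega)]
  omega

open scoped symmDiff

namespace LocalWheels

variable {V : Type*}

section F2Sum

variable [DecidableEq V] {𝒞 : Set (Finset (Sym2 V))}

lemma foldr_symmDiff_eq (l : List (Finset (Sym2 V))) (t : Finset (Sym2 V)) :
    l.foldr symmDiff t = l.foldr symmDiff ∅ ∆ t := by
  induction l with
  | nil => exact (bot_symmDiff t).symm
  | cons s l ih => simp only [List.foldr_cons, ih, symmDiff_assoc]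

lemma IsF2Sum.of_mem {s : Finset (Sym2 V)} (hs : s ∈ 𝒞) : IsF2Sum 𝒞 s :=
  ⟨[s], by simpa using hs, by simp⟩

lemma IsF2Sum.empty : IsF2Sum 𝒞 ∅ := ⟨[], by simp, rfl⟩

lemma IsF2Sum.symmDiff {s t : Finset (Sym2 V)} (hs : IsF2Sum 𝒞 s) (ht : IsF2Sum 𝒞 t) :
    IsF2Sum 𝒞 (s ∆ t) := by
  obtain ⟨l₁, hl₁, rfl⟩ := hs
  obtain ⟨l₂, hl₂, rfl⟩ := ht
  refine ⟨l₁ ++ l₂, fun s hs => ?_, by rw [List.foldr_append, foldr_symmDiff_eq]⟩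
  rcases List.mem_append.1 hs with h | h
  exacts [hl₁ s h, hl₂ s h]

end F2Sum

lemma wlen_append {G : SimpleGraph V} (wt : Sym2 V → ℕ) {u v w : V} (p : G.Walk u v)
    (q : G.Walk v w) : wlen wt (p.append q) = wlen wt p + wlen wt q := by
  simp [wlen, Walk.edges_append]

lemma wlen_copy {G : SimpleGraph V} (wt : Sym2 V → ℕ) {u v u' v' : V} (p : G.Walk u v)
    (hu : u = u') (hv : v = v') : wlen wt (p.copy hu hv) = wlen wt p := by
  simp [wlen, Walk.edges_copy]

namespace WheelSubdiv

variable {G : SimpleGraph V} (W : WheelSubdiv G)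

lemma finRotate_ne (i : Fin W.n) : finRotate W.n i ≠ i :=
  finRotate_ne_self (by have := W.hn; omega) i

lemma branch_ne_branch_finRotate (i : Fin W.n) : W.branch i ≠ W.branch (finRotate W.n i) :=
  fun h => W.finRotate_ne i (W.branch_inj h).symm

lemma spoke_not_nil (i : Fin W.n) : ¬ (W.spoke i).Nil := Walk.not_nil_of_ne (W.center_ne i)

lemma arc_not_nil (i : Fin W.n) : ¬ (W.arc i).Nil :=
  Walk.not_nil_of_ne (W.branch_ne_branch_finRotate i)

lemma eq_center_of_mem_spoke_of_mem_spoke {i j : Fin W.n} (hij : i ≠ j) {x : V}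
    (hi : x ∈ (W.spoke i).support) (hj : x ∈ (W.spoke j).support) : x = W.center := by
  have : x ∈ ({W.center} : Set V) := W.spoke_spoke i j hij ▸ ⟨hi, hj⟩
  exact this

lemma eq_branch_of_mem_spoke_of_mem_arc {i j : Fin W.n} {x : V} (hi : x ∈ (W.spoke i).support)
    (hj : x ∈ (W.arc j).support) : x = W.branch i ∧ (i = j ∨ i = finRotate W.n j) := by
  have : x ∈ ({W.center, W.branch i} ∩ {W.branch j, W.branch (finRotate W.n j)} : Set V) :=
    W.spoke_arc i j ▸ ⟨hi, hj⟩
  simp only [Set.mem_inter_iff, Set.mem_insert_iff, Set.mem_singleton_iff] at this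
  obtain ⟨rfl | rfl, h | h⟩ := this
  · exact absurd h (W.center_ne j)
  · exact absurd h (W.center_ne _)
  · exact ⟨rfl, Or.inl (W.branch_inj h)⟩
  · exact ⟨rfl, Or.inr (W.branch_inj h)⟩

lemma eq_branch_of_mem_arc_of_mem_arc {i j : Fin W.n} (hij : i ≠ j) {x : V}
    (hi : x ∈ (W.arc i).support) (hj : x ∈ (W.arc j).support) :
    (x = W.branch j ∧ finRotate W.n i = j) ∨ (x = W.branch i ∧ finRotate W.n j = i) := by
  have : x ∈ ({W.branch i, W.branch (finRotate W.n i)} ∩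
      {W.branch j, W.branch (finRotate W.n j)} : Set V) := W.arc_arc i j hij ▸ ⟨hi, hj⟩
  simp only [Set.mem_inter_iff, Set.mem_insert_iff, Set.mem_singleton_iff] at this
  obtain ⟨rfl | rfl, h | h⟩ := this
  · exact absurd (W.branch_inj h) hij
  · exact Or.inr ⟨rfl, (W.branch_inj h).symm⟩
  · exact Or.inl ⟨h, W.branch_inj h⟩
  · exact absurd ((finRotate W.n).injective (W.branch_inj h)) hij

lemma spoke_edges_disjoint {i j : Fin W.n} (hij : i ≠ j) {e : Sym2 V}
    (he : e ∈ (W.spoke i).edges) : e ∉ (W.spoke j).edges :=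
  Walk.notMem_edges_of_subsingleton_inter (by rw [W.spoke_spoke i j hij]; simp) he

lemma spoke_arc_edges_disjoint {i j : Fin W.n} {e : Sym2 V} (he : e ∈ (W.spoke i).edges) :
    e ∉ (W.arc j).edges :=
  Walk.notMem_edges_of_subsingleton_inter (fun _ hx _ hy =>
    (W.eq_branch_of_mem_spoke_of_mem_arc hx.1 hx.2).1.trans
      (W.eq_branch_of_mem_spoke_of_mem_arc hy.1 hy.2).1.symm) he

lemma arc_edges_disjoint {i j : Fin W.n} (hij : i ≠ j) {e : Sym2 V}
    (he : e ∈ (W.arc i).edges) : e ∉ (W.arc j).edges := by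
  refine Walk.notMem_edges_of_subsingleton_inter (fun x hx y hy => ?_) he
  rcases W.eq_branch_of_mem_arc_of_mem_arc hij hx.1 hx.2 with ⟨rfl, h⟩ | ⟨rfl, h⟩ <;>
    rcases W.eq_branch_of_mem_arc_of_mem_arc hij hy.1 hy.2 with ⟨rfl, h'⟩ | ⟨rfl, h'⟩
  all_goals first
    | rfl
    | exact absurd (h ▸ h' : finRotate W.n (finRotate W.n i) = i)
        (finRotate_finRotate_ne_self W.hn i)
    | exact absurd (h' ▸ h : finRotate W.n (finRotate W.n i) = i)
        (finRotate_finRotate_ne_self W.hn i)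

lemma mem_arc_edges_of_interior {i : Fin W.n} {x : V} (hx : x ∈ (W.arc i).support)
    (hx₁ : x ≠ W.branch i) (hx₂ : x ≠ W.branch (finRotate W.n i)) {e : Sym2 V}
    (he : e ∈ W.edges) (hxe : x ∈ e) : e ∈ (W.arc i).edges := by
  obtain ⟨j, hj | hj⟩ := he
  · obtain ⟨rfl, rfl | rfl⟩ :=
      W.eq_branch_of_mem_spoke_of_mem_arc (Walk.mem_support_of_mem_edges hj hxe) hx
    exacts [absurd rfl hx₁, absurd rfl hx₂]
  · by_cases hji : j = i
    · exact hji ▸ hj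
    rcases W.eq_branch_of_mem_arc_of_mem_arc hji (Walk.mem_support_of_mem_edges hj hxe) hx
      with ⟨rfl, -⟩ | ⟨rfl, rfl⟩
    exacts [absurd rfl hx₁, absurd rfl hx₂]

lemma mem_spoke_edges_of_interior {i : Fin W.n} {x : V} (hx : x ∈ (W.spoke i).support)
    (hx₁ : x ≠ W.center) (hx₂ : x ≠ W.branch i) {e : Sym2 V}
    (he : e ∈ W.edges) (hxe : x ∈ e) : e ∈ (W.spoke i).edges := by
  obtain ⟨j, hj | hj⟩ := he
  · by_cases hji : j = i
    · exact hji ▸ hj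
    exact absurd (W.eq_center_of_mem_spoke_of_mem_spoke hji
      (Walk.mem_support_of_mem_edges hj hxe) hx) hx₁
  · exact absurd (W.eq_branch_of_mem_spoke_of_mem_arc hx
      (Walk.mem_support_of_mem_edges hj hxe)).1 hx₂

lemma exists_edges_at_branch {i k : Fin W.n} (hk : finRotate W.n k = i) :
    ∃ es ∈ (W.spoke i).edges, ∃ ea ∈ (W.arc i).edges, ∃ ep ∈ (W.arc k).edges,
      W.branch i ∈ es ∧ W.branch i ∈ ea ∧ W.branch i ∈ ep ∧
      ∀ e ∈ W.edges, W.branch i ∈ e → e = es ∨ e = ea ∨ e = ep := by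
  subst hk
  set i := finRotate W.n k
  have hspoke := (W.spoke i).mk_penultimate_end_mem_edges (W.spoke_not_nil i)
  have harc := (W.arc i).mk_start_snd_mem_edges (W.arc_not_nil i)
  have hprev := (W.arc k).mk_penultimate_end_mem_edges (W.arc_not_nil k)
  refine ⟨_, hspoke, _, harc, _, hprev, Sym2.mem_mk_right _ _, Sym2.mem_mk_left _ _,
    Sym2.mem_mk_right _ _, ?_⟩
  have hbi : W.branch i ∈ (W.arc i).support := (W.arc i).start_mem_support
  rintro e ⟨j, hj | hj⟩ hxe
  · obtain ⟨y, rfl⟩ := Sym2.mem_iff_exists.1 hxe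
    obtain ⟨hij, rfl | hji⟩ :=
      W.eq_branch_of_mem_spoke_of_mem_arc (Walk.mem_support_of_mem_edges hj hxe) hbi
    · exact Or.inl (by rw [(W.spoke_path _).eq_penultimate_of_mem_edges hj, Sym2.eq_swap])
    · exact absurd ((W.branch_inj hij).trans hji).symm (W.finRotate_ne i)
  obtain ⟨y, rfl⟩ := Sym2.mem_iff_exists.1 hxe
  by_cases hji : j = i
  · subst hji
    exact Or.inr (Or.inl (by rw [(W.arc_path _).eq_snd_of_mem_edges hj]))
  rcases W.eq_branch_of_mem_arc_of_mem_arc hji (Walk.mem_support_of_mem_edges hj hxe) hbi with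
    ⟨-, hjk⟩ | ⟨h, -⟩
  · obtain rfl := (finRotate W.n).injective hjk
    exact Or.inr (Or.inr (by rw [(W.arc_path _).eq_penultimate_of_mem_edges hj, Sym2.eq_swap]))
  · exact absurd (W.branch_inj h).symm hji

lemma mem_piece_edges {i : Fin W.n} {e : Sym2 V} :
    e ∈ (W.piece i).edges ↔
      e ∈ (W.spoke i).edges ∨ e ∈ (W.arc i).edges ∨ e ∈ (W.spoke (finRotate W.n i)).edges := by
  simp [piece, Walk.edges_append, Walk.edges_reverse]

lemma piece_edges_subset (i : Fin W.n) {e : Sym2 V} (he : e ∈ (W.piece i).edges) :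
    e ∈ W.edges := by
  rcases W.mem_piece_edges.1 he with h | h | h
  exacts [⟨i, Or.inl h⟩, ⟨i, Or.inr h⟩, ⟨_, Or.inl h⟩]

lemma mem_piece_edges_of_mem_arc {i j : Fin W.n} {e : Sym2 V} (he : e ∈ (W.arc j).edges) :
    e ∈ (W.piece i).edges ↔ i = j := by
  refine ⟨fun h => ?_, fun h => W.mem_piece_edges.2 (Or.inr (Or.inl (h ▸ he)))⟩
  rcases W.mem_piece_edges.1 h with h | h | h
  · exact absurd he (W.spoke_arc_edges_disjoint h)
  · by_contra hij
    exact W.arc_edges_disjoint hij h he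
  · exact absurd he (W.spoke_arc_edges_disjoint h)

lemma mem_piece_edges_of_mem_spoke {i j : Fin W.n} {e : Sym2 V} (he : e ∈ (W.spoke j).edges) :
    e ∈ (W.piece i).edges ↔ i = j ∨ finRotate W.n i = j := by
  refine ⟨fun h => ?_, fun h => ?_⟩
  · rcases W.mem_piece_edges.1 h with h | h | h
    · exact Or.inl (by_contra fun hij => W.spoke_edges_disjoint hij h he)
    · exact absurd h (W.spoke_arc_edges_disjoint he)
    · exact Or.inr (by_contra fun hij => W.spoke_edges_disjoint hij h he)
  · rcases h with rfl | rfl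
    exacts [W.mem_piece_edges.2 (Or.inl he), W.mem_piece_edges.2 (Or.inr (Or.inr he))]

lemma piece_isCycle (i : Fin W.n) : (W.piece i).IsCycle := by
  have hi : i ≠ finRotate W.n i := (W.finRotate_ne i).symm
  refine (W.spoke_path i).isCycle_append_of_mem_support
    ((W.arc_path i).append_of_mem_support (W.spoke_path _).reverse fun x hx hx' =>
      (W.eq_branch_of_mem_spoke_of_mem_arc (by simpa using hx') hx).1) (fun x hx hx' => ?_) ?_
  · rcases (Walk.mem_support_append_iff _ _).1 hx' with h | h
    · exact Or.inr (W.eq_branch_of_mem_spoke_of_mem_arc hx h).1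
    · exact Or.inl (W.eq_center_of_mem_spoke_of_mem_spoke hi hx (by simpa using h))
  · have h₁ := Walk.not_nil_iff_lt_length.1 (W.arc_not_nil i)
    have h₂ := Walk.not_nil_iff_lt_length.1 (W.spoke_not_nil (finRotate W.n i))
    right
    simp only [Walk.length_append, Walk.length_reverse]
    omega

-- Indices are taken mod `n` so that the rim can be assembled by recursion on `k : ℕ`.
def bidx (k : ℕ) : Fin W.n := ⟨k % W.n, Nat.mod_lt _ (by have := W.hn; omega)⟩

lemma finRotate_bidx (k : ℕ) : finRotate W.n (W.bidx k) = W.bidx (k + 1) := by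
  have : NeZero W.n := ⟨by have := W.hn; omega⟩
  rw [finRotate_apply, Fin.ext_iff, Fin.val_add]
  simp [bidx, Nat.add_mod]

lemma bidx_eq_bidx_iff {j k : ℕ} (hj : j < W.n) (hk : k < W.n) : W.bidx j = W.bidx k ↔ j = k := by
  simp [bidx, Fin.ext_iff, Nat.mod_eq_of_lt hj, Nat.mod_eq_of_lt hk]

lemma bidx_val_eq_self (i : Fin W.n) : W.bidx i = i := Fin.ext (Nat.mod_eq_of_lt i.isLt)

lemma bidx_n : W.bidx W.n = W.bidx 0 := Fin.ext (by simp [bidx])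

def rimPath : (k : ℕ) → G.Walk (W.branch (W.bidx 0)) (W.branch (W.bidx k))
  | 0 => .nil
  | k + 1 => (rimPath k).append
      ((W.arc (W.bidx k)).copy rfl (congrArg W.branch (W.finRotate_bidx k)))

lemma mem_edges_rimPath {k : ℕ} {e : Sym2 V} :
    e ∈ (W.rimPath k).edges ↔ ∃ j < k, e ∈ (W.arc (W.bidx j)).edges := by
  induction k with
  | zero => simp [rimPath]
  | succ k ih =>
    simp only [rimPath, Walk.edges_append, Walk.edges_copy, List.mem_append, ih,
      Nat.lt_succ_iff_lt_or_eq, or_and_right, exists_or, exists_eq_left]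

lemma mem_support_rimPath {k : ℕ} {x : V} (hx : x ∈ (W.rimPath k).support) :
    x = W.branch (W.bidx k) ∨ ∃ j < k, x ∈ (W.arc (W.bidx j)).support := by
  induction k with
  | zero => simpa [rimPath] using hx
  | succ k ih =>
    rw [rimPath, Walk.mem_support_append_iff, Walk.support_copy] at hx
    refine Or.inr ?_
    rcases hx with hx | hx
    · rcases ih hx with rfl | ⟨j, hj, hx⟩
      exacts [⟨k, k.lt_succ_self, Walk.start_mem_support _⟩, ⟨j, by omega, hx⟩]
    · exact ⟨k, k.lt_succ_self, hx⟩

lemma le_length_rimPath (k : ℕ) : k ≤ (W.rimPath k).length := by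
  induction k with
  | zero => simp
  | succ k ih =>
    have := Walk.not_nil_iff_lt_length.1 (W.arc_not_nil (W.bidx k))
    rw [rimPath, Walk.length_append, Walk.length_copy]
    omega

lemma wlen_rimPath (wt : Sym2 V → ℕ) (k : ℕ) :
    wlen wt (W.rimPath k) = ∑ j ∈ Finset.range k, wlen wt (W.arc (W.bidx j)) := by
  induction k with
  | zero => simp [rimPath, wlen]
  | succ k ih => rw [rimPath, wlen_append, wlen_copy, ih, Finset.sum_range_succ]

lemma isPath_rimPath : ∀ k < W.n, (W.rimPath k).IsPath
  | 0, _ => Walk.IsPath.nil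
  | k + 1, hk => by
    refine (isPath_rimPath k (by omega)).append_of_mem_support
      ((Walk.isPath_copy _ _ _).2 (W.arc_path _)) fun x hx hx' => ?_
    rw [Walk.support_copy] at hx'
    rcases W.mem_support_rimPath hx with rfl | ⟨j, hj, hx⟩
    · rfl
    have hjk : W.bidx j ≠ W.bidx k := by rw [Ne, W.bidx_eq_bidx_iff (by omega) (by omega)]; omega
    rcases W.eq_branch_of_mem_arc_of_mem_arc hjk hx hx' with ⟨h, -⟩ | ⟨-, h⟩
    · exact h
    · rw [W.finRotate_bidx, W.bidx_eq_bidx_iff hk (by omega)] at h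
      omega

lemma n_sub_one_add_one : W.n - 1 + 1 = W.n := Nat.sub_add_cancel (by have := W.hn; omega)

def rim : G.Walk (W.branch (W.bidx 0)) (W.branch (W.bidx 0)) :=
  (W.rimPath (W.n - 1)).append ((W.arc (W.bidx (W.n - 1))).copy rfl
    (congrArg W.branch (by rw [W.finRotate_bidx, W.n_sub_one_add_one, W.bidx_n])))

lemma mem_rim_edges {e : Sym2 V} : e ∈ W.rim.edges ↔ ∃ i, e ∈ (W.arc i).edges := by
  rw [rim, Walk.edges_append, Walk.edges_copy, List.mem_append, mem_edges_rimPath]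
  refine ⟨fun h => ?_, fun ⟨i, hi⟩ => ?_⟩
  · rcases h with ⟨j, -, h⟩ | h
    exacts [⟨_, h⟩, ⟨_, h⟩]
  · rw [← W.bidx_val_eq_self i] at hi
    rcases Nat.lt_or_ge i (W.n - 1) with h | h
    · exact Or.inl ⟨i, h, hi⟩
    · rw [show (i : ℕ) = W.n - 1 by omega] at hi
      exact Or.inr hi

lemma wlen_rim (wt : Sym2 V → ℕ) : wlen wt W.rim = W.rimLen wt := by
  rw [rim, wlen_append, wlen_copy, wlen_rimPath, ← Finset.sum_range_succ, W.n_sub_one_add_one,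
    rimLen, ← Fin.sum_univ_eq_sum_range (fun j => wlen wt (W.arc (W.bidx j)))]
  exact Finset.sum_congr rfl fun i _ => by rw [W.bidx_val_eq_self]

lemma rim_isCycle : W.rim.IsCycle := by
  have hn := W.hn
  refine (W.isPath_rimPath _ (by omega)).isCycle_append_of_mem_support
    ((Walk.isPath_copy _ _ _).2 (W.arc_path _)) (fun x hx hx' => ?_)
    (Or.inl ((W.le_length_rimPath _).trans_lt' (by omega)))
  rw [Walk.support_copy] at hx'
  rcases W.mem_support_rimPath hx with rfl | ⟨j, hj, hx⟩
  · exact Or.inr rfl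
  have hjk : W.bidx j ≠ W.bidx (W.n - 1) := by
    rw [Ne, W.bidx_eq_bidx_iff (by omega) (by omega)]; omega
  rcases W.eq_branch_of_mem_arc_of_mem_arc hjk hx hx' with ⟨h, -⟩ | ⟨h, h'⟩
  · exact Or.inr h
  · rw [W.finRotate_bidx, W.n_sub_one_add_one, W.bidx_n] at h'
    exact Or.inl (h' ▸ h)

/-- The edge set of the 𝔽₂-sum of the pieces indexed by `B`: the `j`-th arc lies on the `j`-th
piece only, the `j`-th spoke on the `j`-th and the preceding piece. -/
def pieceSum (B : Finset (Fin W.n)) : Set (Sym2 V) :=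
  {e | (∃ j ∈ B, e ∈ (W.arc j).edges) ∨
    ∃ j, e ∈ (W.spoke j).edges ∧ Xor (j ∈ B) ((finRotate W.n).symm j ∈ B)}

variable {W} {B : Finset (Fin W.n)} {e : Sym2 V}

lemma mem_pieceSum_of_mem_arc {j : Fin W.n} (he : e ∈ (W.arc j).edges) :
    e ∈ W.pieceSum B ↔ j ∈ B := by
  refine ⟨fun h => ?_, fun h => Or.inl ⟨j, h, he⟩⟩
  rcases h with ⟨i, hi, h⟩ | ⟨i, h, -⟩
  · obtain rfl : i = j := by_contra fun hij => W.arc_edges_disjoint hij h he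
    exact hi
  · exact absurd he (W.spoke_arc_edges_disjoint h)

lemma mem_pieceSum_of_mem_spoke {j : Fin W.n} (he : e ∈ (W.spoke j).edges) :
    e ∈ W.pieceSum B ↔ Xor (j ∈ B) ((finRotate W.n).symm j ∈ B) := by
  refine ⟨fun h => ?_, fun h => Or.inr ⟨j, he, h⟩⟩
  rcases h with ⟨i, -, h⟩ | ⟨i, h, hx⟩
  · exact absurd h (W.spoke_arc_edges_disjoint he)
  · obtain rfl : i = j := by_contra fun hij => W.spoke_edges_disjoint hij h he
    exact hx

lemma pieceSum_subset_edges : W.pieceSum B ⊆ W.edges := by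
  rintro e (⟨j, -, h⟩ | ⟨j, h, -⟩)
  exacts [⟨j, Or.inr h⟩, ⟨j, Or.inl h⟩]

lemma pieceSum_empty : W.pieceSum ∅ = ∅ := by
  ext e
  simp [pieceSum]

lemma pieceSum_insert {i : Fin W.n} (hi : i ∉ B) :
    W.pieceSum (insert i B) = W.pieceSum B ∆ {e | e ∈ (W.piece i).edges} := by
  ext e
  rw [Set.mem_symmDiff, Set.mem_ofPred_eq]
  by_cases he : e ∈ W.edges
  · obtain ⟨j, hj | hj⟩ := he
    · have hjk : j ≠ (finRotate W.n).symm j := fun h => W.finRotate_ne j (by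
        simpa only [← h] using (finRotate W.n).apply_symm_apply j)
      rw [mem_pieceSum_of_mem_spoke hj, mem_pieceSum_of_mem_spoke hj,
        W.mem_piece_edges_of_mem_spoke hj, ← Equiv.eq_symm_apply]
      generalize (finRotate W.n).symm j = k at hjk ⊢
      by_cases hij : i = j
      · subst hij
        simp [hi, Xor, hjk.symm]
      by_cases hik : i = k
      · subst hik
        simp [hi, Xor, hjk]
      simp [Xor, hij, hik, Ne.symm hij, Ne.symm hik]
    · rw [mem_pieceSum_of_mem_arc hj, mem_pieceSum_of_mem_arc hj,
        W.mem_piece_edges_of_mem_arc hj, Finset.mem_insert]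
      by_cases h : i = j
      · subst h; simp [hi]
      · simp [h, Ne.symm h]
  · exact iff_of_false (fun h => he (pieceSum_subset_edges h))
      (by rintro (⟨h, -⟩ | ⟨h, -⟩); exacts [he (pieceSum_subset_edges h),
        he (W.piece_edges_subset i h)])

lemma pieceSum_compl : W.pieceSum Bᶜ = W.pieceSum B ∆ {e | e ∈ W.rim.edges} := by
  ext e
  rw [Set.mem_symmDiff, Set.mem_ofPred_eq, W.mem_rim_edges]
  by_cases he : e ∈ W.edges
  · obtain ⟨j, hj | hj⟩ := he
    · have hrim : ¬ ∃ i, e ∈ (W.arc i).edges := fun ⟨_, h⟩ => W.spoke_arc_edges_disjoint hj h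
      rw [mem_pieceSum_of_mem_spoke hj, mem_pieceSum_of_mem_spoke hj, Finset.mem_compl,
        Finset.mem_compl]
      simp only [Xor, hrim]
      tauto
    · have hrim : ∃ i, e ∈ (W.arc i).edges := ⟨j, hj⟩
      rw [mem_pieceSum_of_mem_arc hj, mem_pieceSum_of_mem_arc hj, Finset.mem_compl]
      tauto
  · exact iff_of_false (fun h => he (pieceSum_subset_edges h))
      (by rintro (⟨h, -⟩ | ⟨⟨i, h⟩, -⟩); exacts [he (pieceSum_subset_edges h), he ⟨i, Or.inr h⟩])

variable [DecidableEq V] {u : V} {c : G.Walk u u}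

lemma mem_edges_iff_of_mem_arc (hc : c.IsTrail) (hcW : ∀ e ∈ c.edges, e ∈ W.edges)
    {i : Fin W.n} {e e' : Sym2 V} (he : e ∈ (W.arc i).edges) (he' : e' ∈ (W.arc i).edges) :
    e ∈ c.edges ↔ e' ∈ c.edges :=
  hc.mem_edges_iff_of_isPath (W.arc_path i) (fun _ hx hx₁ hx₂ f hf hxf =>
    W.mem_arc_edges_of_interior hx hx₁ hx₂ (hcW f hf) hxf) e he e' he'

lemma mem_edges_iff_of_mem_spoke (hc : c.IsTrail) (hcW : ∀ e ∈ c.edges, e ∈ W.edges)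
    {i : Fin W.n} {e e' : Sym2 V} (he : e ∈ (W.spoke i).edges) (he' : e' ∈ (W.spoke i).edges) :
    e ∈ c.edges ↔ e' ∈ c.edges :=
  hc.mem_edges_iff_of_isPath (W.spoke_path i) (fun _ hx hx₁ hx₂ f hf hxf =>
    W.mem_spoke_edges_of_interior hx hx₁ hx₂ (hcW f hf) hxf) e he e' he'

lemma exists_mem_spoke_iff_xor (hc : c.IsTrail) (hcW : ∀ e ∈ c.edges, e ∈ W.edges)
    {i k : Fin W.n} (hk : finRotate W.n k = i) :
    ∃ es ∈ (W.spoke i).edges, ∃ ea ∈ (W.arc i).edges, ∃ ep ∈ (W.arc k).edges,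
      (es ∈ c.edges ↔ Xor (ea ∈ c.edges) (ep ∈ c.edges)) := by
  obtain ⟨es, hes, ea, hea, ep, hep, hs, ha, hp, hW⟩ := W.exists_edges_at_branch hk
  refine ⟨es, hes, ea, hea, ep, hep, hc.mem_edges_iff_xor_of_incident_triple ?_ ?_ ?_ hs ha hp
    fun e he hxe => hW e (hcW e he) hxe⟩
  · rintro rfl; exact W.spoke_arc_edges_disjoint hes hea
  · rintro rfl; exact W.spoke_arc_edges_disjoint hes hep
  · rintro rfl; exact W.arc_edges_disjoint (fun h => W.finRotate_ne k (hk.trans h)) hea hep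

lemma exists_pieceSum_eq_edges (hc : c.IsTrail) (hcW : ∀ e ∈ c.edges, e ∈ W.edges) :
    ∃ B, W.pieceSum B = {e | e ∈ c.edges} := by
  set B : Finset (Fin W.n) := {i | ∃ e ∈ (W.arc i).edges, e ∈ c.edges}
  have harc {j : Fin W.n} {e : Sym2 V} (he : e ∈ (W.arc j).edges) : e ∈ c.edges ↔ j ∈ B := by
    simp only [B, Finset.mem_filter, Finset.mem_univ, true_and]
    exact ⟨fun h => ⟨e, he, h⟩, fun ⟨e', he', h⟩ => (W.mem_edges_iff_of_mem_arc hc hcW he he').2 h⟩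
  refine ⟨B, Set.ext fun e => ?_⟩
  rw [Set.mem_ofPred_eq]
  by_cases he : e ∈ W.edges
  · obtain ⟨j, hj | hj⟩ := he
    · obtain ⟨es, hes, ea, hea, ep, hep, hxor⟩ :=
        W.exists_mem_spoke_iff_xor hc hcW ((finRotate W.n).apply_symm_apply j)
      rw [mem_pieceSum_of_mem_spoke hj, W.mem_edges_iff_of_mem_spoke hc hcW hj hes, hxor,
        harc hea, harc hep]
    · rw [mem_pieceSum_of_mem_arc hj, harc hj]
  · exact iff_of_false (fun h => he (pieceSum_subset_edges h)) fun h => he (hcW e h)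

variable {wt : Sym2 V → ℕ} {r : ℕ∞}

lemma piece_mem_shortCycleEdgeSets {i : Fin W.n} (h : (W.pieceLen wt i : ℕ∞) ≤ r) :
    (W.piece i).edges.toFinset ∈ shortCycleEdgeSets G wt r W.edges :=
  ⟨_, _, W.piece_isCycle i, fun _ he => W.piece_edges_subset i he, h, rfl⟩

lemma rim_mem_shortCycleEdgeSets (h : (W.rimLen wt : ℕ∞) ≤ r) :
    W.rim.edges.toFinset ∈ shortCycleEdgeSets G wt r W.edges := by
  refine ⟨_, _, W.rim_isCycle, fun e he => ?_, by rwa [W.wlen_rim], rfl⟩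
  obtain ⟨i, hi⟩ := W.mem_rim_edges.1 he
  exact ⟨i, Or.inr hi⟩

lemma isF2Sum_of_pieceSum_eq (hB : ∀ i ∈ B, (W.pieceLen wt i : ℕ∞) ≤ r) {t : Finset (Sym2 V)}
    (ht : W.pieceSum B = ↑t) : IsF2Sum (shortCycleEdgeSets G wt r W.edges) t := by
  induction B using Finset.induction_on generalizing t with
  | empty =>
    obtain rfl : t = ∅ := Finset.coe_eq_empty.1 (ht.symm.trans pieceSum_empty)
    exact IsF2Sum.empty
  | insert i B hi ih =>
    have hsum : W.pieceSum B = ↑(t ∆ (W.piece i).edges.toFinset) := by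
      rw [Finset.coe_symmDiff, ← ht, pieceSum_insert hi, List.coe_toFinset,
        symmDiff_symmDiff_cancel_right]
    simpa using (ih (fun j hj => hB j (Finset.mem_insert_of_mem hj)) hsum).symmDiff
      (IsF2Sum.of_mem (piece_mem_shortCycleEdgeSets (hB i (Finset.mem_insert_self i B))))

end WheelSubdiv

end LocalWheels

theorem LocalWheels.stmt1_general {V : Type*} [DecidableEq V]
    (G : SimpleGraph V) (wt : Sym2 V → ℕ) (r : ℕ∞)
    (W : LocalWheels.WheelSubdiv G) (hexp : W.RExplicit wt r) :
    W.RLocal wt r := by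
  intro v c hc hcW
  obtain ⟨B, hB⟩ := W.exists_pieceSum_eq_edges hc.isTrail hcW
  rw [← List.coe_toFinset] at hB
  rcases hexp with hshort | ⟨⟨i₀, hshort⟩, hrim⟩
  · exact WheelSubdiv.isF2Sum_of_pieceSum_eq (fun i _ => hshort i) hB
  by_cases hi₀ : i₀ ∈ B
  · have hBc : W.pieceSum Bᶜ = ↑(c.edges.toFinset ∆ W.rim.edges.toFinset) := by
      rw [WheelSubdiv.pieceSum_compl, hB, Finset.coe_symmDiff, List.coe_toFinset,
        List.coe_toFinset]
    have := (WheelSubdiv.isF2Sum_of_pieceSum_eq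
      (fun i hi => hshort i fun h => Finset.mem_compl.1 hi (h ▸ hi₀)) hBc).symmDiff
      (IsF2Sum.of_mem (WheelSubdiv.rim_mem_shortCycleEdgeSets hrim))
    rwa [symmDiff_symmDiff_cancel_right] at this
  · exact WheelSubdiv.isF2Sum_of_pieceSum_eq (fun i hi => hshort i (ne_of_mem_of_not_mem hi hi₀)) hB

/-- Every subdivision of a wheel with an `r`-explicit generating set is
`r`-local: its cycles of length at most `r` generate all its cycles. -/
theorem LocalWheels.stmt1 {V : Type*} [Fintype V] [DecidableEq V]
    (G : SimpleGraph V) (wt : Sym2 V → ℕ) (hw : LocalWheels.WeightPos G wt) (r : ℕ∞)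
    (W : LocalWheels.WheelSubdiv G) (hexp : W.RExplicit wt r) :
    W.RLocal wt r :=
  LocalWheels.stmt1_general G wt r W hexp
end

section
/- Let G be a weighted graph, θ a theta-graph of parameter r in G, and o a cycle of length at most r containing a branching vertex v of θ. Then at most one θ-bridge included in o is secondary; that is, there cannot be two secondary bridges. -/
/-!
Common definitions: weighted graphs, weighted lengths of walks, 𝔽₂-generation of cycles,
subdivisions of wheels (with pieces and rim), theta graphs, the classes 𝒲 and 𝒲*,
fans and pre-fans, arcs/bridges/detours of a cycle relative to a theta graph.
-/

open SimpleGraph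

/-!
Rotate `o` to a closed walk `c` based at `vb`, and measure a position `k` along `c` by the
weighted length `t k` of the first `k` edges of `c`; let `L` be the length of `c`. A path all of
whose edges lie on a cycle runs monotonically along it. Hence a bridge occupies a stretch
`[l, h]` of positions with `0 < l < h < c.length`, and the only paths within `c` from the vertex
at position `k` to `vb` have lengths `t k` and `L - t k`. So a secondary bridge satisfies
`2 t l < L < 2 t h`: it straddles the point of `c` opposite to `vb`. Two such stretches overlap,
and since bridges meet `θ` only in their endvertices, overlapping bridges coincide.
-/

namespace SimpleGraph.Walk

variable {V : Type*} {G : SimpleGraph V} {v : V} {c : G.Walk v v}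

theorem IsCycle.eq_getVert_pred_or_succ (hc : c.IsCycle) {i : ℕ} (hi : 0 < i)
    (hin : i < c.length) {y : V} (hy : s(c.getVert i, y) ∈ c.edges) :
    y = c.getVert (i - 1) ∨ y = c.getVert (i + 1) := by
  obtain ⟨k, hk, hke⟩ := (c.mk_mem_edges_iff_exists).1 hy
  rcases Sym2.eq_iff.1 hke with ⟨hki, rfl⟩ | ⟨rfl, hki⟩
  · right
    rw [hc.getVert_injOn' (show k ≤ c.length - 1 by omega) (show i ≤ c.length - 1 by omega) hki]
  · left
    rw [← hc.getVert_injOn ⟨by omega, by omega⟩ ⟨by omega, hin.le⟩ hki]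
    rfl

theorem IsCycle.edges_eq_of_snd_ne (hc : c.IsCycle) {x y : V} (P : G.Walk x y) {i : ℕ}
    (hx : x = c.getVert i) (hi : 0 < i) (hin : i < c.length) (hP : P.IsPath)
    (hPc : ∀ e ∈ P.edges, e ∈ c.edges) (hv : v ∈ P.support → y = v)
    (hsnd : P.snd ≠ c.getVert (i - 1)) :
    i + P.length ≤ c.length ∧ y = c.getVert (i + P.length) ∧
      P.edges = (c.edges.drop i).take P.length := by
  -- On `c`, `c.getVert i` only has the neighbours `c.getVert (i ± 1)`; stepping back is excluded
  -- by `hsnd` at the first step and by `hP` at the later ones.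
  induction P generalizing i with
  | nil => simp [hx, hin.le]
  | @cons x x' y hadj P ih =>
    subst hx
    have hstep : x' = c.getVert (i + 1) :=
      (hc.eq_getVert_pred_or_succ hi hin (hPc _ (by simp))).resolve_left (by simpa using hsnd)
    have hP' : i + 1 + P.length ≤ c.length ∧ y = c.getVert (i + 1 + P.length) ∧
        P.edges = (c.edges.drop (i + 1)).take P.length := by
      rcases Nat.lt_or_ge (i + 1) c.length with hlt | hge
      · refine ih hstep (by omega) hlt hP.of_cons (fun e he => hPc e (by simp [he]))
          (fun h => hv (by simp [h])) ?_
        intro h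
        rw [Nat.add_sub_cancel] at h
        exact ((cons_isPath_iff _ _).1 hP).2 (h ▸ P.getVert_mem_support 1)
      · have hx' : x' = v := by rw [hstep, show i + 1 = c.length by omega, getVert_length]
        have hy : y = x' := hx' ▸ hv (List.mem_cons_of_mem _ (hx' ▸ P.start_mem_support))
        subst hy
        obtain rfl : P = nil := eq_nil_iff_nil.2 (isPath_iff_nil.1 hP.of_cons)
        simp [hstep, show i + 1 = c.length by omega]
    obtain ⟨hlen, hy, hedges⟩ := hP'
    refine ⟨by simp only [length_cons]; omega, by simp [hy, Nat.add_comm 1, add_assoc], ?_⟩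
    rw [edges_cons, hedges, length_cons, List.drop_eq_getElem_cons (i := i) (by simpa using hin),
      List.take_succ_cons, getElem_edges, ← hstep]

theorem IsCycle.edges_eq_of_isPath (hc : c.IsCycle) {i : ℕ} (hi : 0 < i) (hin : i < c.length)
    {y : V} (P : G.Walk (c.getVert i) y) (hP : P.IsPath) (hPc : ∀ e ∈ P.edges, e ∈ c.edges)
    (hv : v ∈ P.support → y = v) :
    (i + P.length ≤ c.length ∧ y = c.getVert (i + P.length) ∧
        P.edges = (c.edges.drop i).take P.length) ∨
      (P.length ≤ i ∧ y = c.getVert (i - P.length) ∧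
        P.edges = (c.edges.take i).reverse.take P.length) := by
  by_cases hsnd : P.snd = c.getVert (i - 1)
  · -- A first step backwards along `c` is a first step forwards along `c.reverse`.
    right
    have hrev : c.getVert i = c.reverse.getVert (c.length - i) := by
      rw [getVert_reverse, Nat.sub_sub_self hin.le]
    obtain ⟨hlen, hy, hedges⟩ := hc.reverse.edges_eq_of_snd_ne P hrev (by omega)
      (by rw [length_reverse]; omega) hP (fun e he => by simpa using hPc e he) hv (by
        rw [hsnd, getVert_reverse, show c.length - (c.length - i - 1) = i + 1 by omega]
        exact hc.getVert_sub_one_ne_getVert_add_one hin.le)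
    simp only [length_reverse] at hlen
    refine ⟨by omega, ?_, ?_⟩
    · rw [getVert_reverse, show c.length - (c.length - i + P.length) = i - P.length by
        omega] at hy
      exact hy
    · rw [hedges, edges_reverse, List.drop_reverse, length_edges, Nat.sub_sub_self hin.le]
  · exact .inl (hc.edges_eq_of_snd_ne P rfl hi hin hP hPc hv hsnd)

theorem IsCycle.edges_eq_reverse_take_or_drop (hc : c.IsCycle) {i : ℕ} (hi : 0 < i)
    (hin : i < c.length) {S : G.Walk (c.getVert i) v} (hS : S.IsPath)
    (hSc : ∀ e ∈ S.edges, e ∈ c.edges) :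
    S.edges = (c.edges.take i).reverse ∨ S.edges = c.edges.drop i := by
  rcases hc.edges_eq_of_isPath hi hin S hS hSc fun _ => rfl with ⟨hlen, hv, he⟩ | ⟨hlen, hv, he⟩
  · right
    have hend := (hc.getVert_endpoint_iff hlen).1 hv.symm
    rw [he, List.take_of_length_le (by rw [List.length_drop, length_edges]; omega)]
  · left
    have hend := (hc.getVert_endpoint_iff (by omega)).1 hv.symm
    rw [he, List.take_of_length_le
      (by simp only [List.length_reverse, List.length_take, length_edges]; omega)]

/-- `Q` runs along `c`, in either direction, between the positions `l` and `h`; the bounds on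
`l` and `h` say that it avoids the base of `c`. -/
structure IsSegment (c : G.Walk v v) {a b : V} (Q : G.Walk a b) (l h : ℕ) : Prop where
  pos : 0 < l
  lt : l < h
  lt_length : h < c.length
  ends : s(a, b) = s(c.getVert l, c.getVert h)
  mem_edges_iff : ∀ e, e ∈ Q.edges ↔ e ∈ (c.edges.drop l).take (h - l)

theorem IsCycle.exists_isSegment (hc : c.IsCycle) {a b : V} {Q : G.Walk a b} (hQ : Q.IsPath)
    (hQc : ∀ e ∈ Q.edges, e ∈ c.edges) (hQ0 : 0 < Q.length) (hvQ : v ∉ Q.support) :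
    ∃ l h, c.IsSegment Q l h := by
  have hav : a ≠ v := by rintro rfl; exact hvQ Q.start_mem_support
  have hbv : b ≠ v := by rintro rfl; exact hvQ Q.end_mem_support
  have ha : a ∈ c.support := c.fst_mem_support_of_mem_edges
    (hQc _ (Q.mk_start_snd_mem_edges (not_nil_iff_lt_length.2 hQ0)))
  obtain ⟨i, rfl, hi⟩ := mem_support_iff_exists_getVert.1 ha
  have hi' := mt (hc.getVert_endpoint_iff hi).2 hav
  rcases hc.edges_eq_of_isPath (by omega) (by omega) Q hQ hQc (absurd · hvQ)
    with ⟨hlen, hb, he⟩ | ⟨hlen, hb, he⟩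
  · have := mt (hc.getVert_endpoint_iff hlen).2 (hb ▸ hbv)
    refine ⟨i, i + Q.length, ⟨by omega, by omega, by omega,
      congrArg (fun y => s(c.getVert i, y)) hb, fun e => ?_⟩⟩
    rw [he, Nat.add_sub_cancel_left]
  · have := mt (hc.getVert_endpoint_iff (by omega)).2 (hb ▸ hbv)
    refine ⟨i - Q.length, i, ⟨by omega, by omega, by omega,
      Sym2.eq_swap.trans (congrArg (fun y => s(y, c.getVert i)) hb), fun e => ?_⟩⟩
    rw [he, List.take_reverse, List.mem_reverse,
      List.length_take_of_le (by rw [length_edges]; omega), List.drop_take, Nat.sub_sub_self hlen]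

variable {a b : V} {Q : G.Walk a b} {l h : ℕ}

theorem IsSegment.getVert_left (hs : c.IsSegment Q l h) :
    c.getVert l = a ∨ c.getVert l = b :=
  Sym2.mem_iff.1 (hs.ends ▸ Sym2.mem_mk_left _ _ : c.getVert l ∈ s(a, b))

theorem IsSegment.getVert_right (hs : c.IsSegment Q l h) :
    c.getVert h = a ∨ c.getVert h = b :=
  Sym2.mem_iff.1 (hs.ends ▸ Sym2.mem_mk_right _ _ : c.getVert h ∈ s(a, b))

theorem IsSegment.getVert_mem_support (hs : c.IsSegment Q l h) {k : ℕ} (hlk : l ≤ k)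
    (hkh : k < h) : c.getVert k ∈ Q.support := by
  have hn := hs.lt_length
  have hk : k < c.edges.length := by rw [length_edges]; omega
  have hmem : c.edges[k] ∈ Q.edges := by
    rw [hs.mem_edges_iff, List.mem_iff_getElem]
    exact ⟨k - l, by simp only [List.length_take, List.length_drop, length_edges]; omega,
      by simp [Nat.add_sub_cancel' hlk]⟩
  rw [getElem_edges] at hmem
  exact Q.fst_mem_support_of_mem_edges hmem

theorem IsSegment.getVert_not_mem (hc : c.IsCycle) (hs : c.IsSegment Q l h) {T : Set V}
    (hT : ∀ z ∈ Q.support, z ≠ a → z ≠ b → z ∉ T) {k : ℕ} (hlk : l < k) (hkh : k < h) :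
    c.getVert k ∉ T := by
  have hn := hs.lt_length
  have hne : ∀ j, j ≠ k → j < c.length → c.getVert k ≠ c.getVert j := fun j hj hjn heq =>
    hj (hc.getVert_injOn' (show k ≤ c.length - 1 by omega) (show j ≤ c.length - 1 by omega)
      heq).symm
  have hends := hs.ends
  refine hT _ (hs.getVert_mem_support hlk.le hkh) ?_ ?_
  · intro hka
    rcases Sym2.eq_iff.1 hends with ⟨h1, _⟩ | ⟨h1, _⟩
    · exact hne l (by omega) (by omega) (hka.trans h1)
    · exact hne h (by omega) hn (hka.trans h1)
  · intro hkb
    rcases Sym2.eq_iff.1 hends with ⟨_, h2⟩ | ⟨_, h2⟩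
    · exact hne h (by omega) hn (hkb.trans h2)
    · exact hne l (by omega) (by omega) (hkb.trans h2)

theorem IsSegment.mem_edges_iff_of_overlap (hc : c.IsCycle) {a₁ b₁ a₂ b₂ : V}
    {Q₁ : G.Walk a₁ b₁} {Q₂ : G.Walk a₂ b₂} {l₁ h₁ l₂ h₂ : ℕ} (hs₁ : c.IsSegment Q₁ l₁ h₁)
    (hs₂ : c.IsSegment Q₂ l₂ h₂) {T : Set V} (ha₁ : a₁ ∈ T) (hb₁ : b₁ ∈ T)
    (hT₁ : ∀ z ∈ Q₁.support, z ≠ a₁ → z ≠ b₁ → z ∉ T) (ha₂ : a₂ ∈ T) (hb₂ : b₂ ∈ T)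
    (hT₂ : ∀ z ∈ Q₂.support, z ≠ a₂ → z ≠ b₂ → z ∉ T) (h₁₂ : l₂ < h₁) (h₂₁ : l₁ < h₂)
    (e : Sym2 V) : e ∈ Q₁.edges ↔ e ∈ Q₂.edges := by
  have hmem : ∀ {a b : V} {Q : G.Walk a b} {l h : ℕ}, c.IsSegment Q l h → a ∈ T → b ∈ T →
      c.getVert l ∈ T ∧ c.getVert h ∈ T := fun hs ha hb =>
    ⟨hs.getVert_left.elim (· ▸ ha) (· ▸ hb), hs.getVert_right.elim (· ▸ ha) (· ▸ hb)⟩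
  have hl : l₁ = l₂ := by
    rcases lt_trichotomy l₁ l₂ with hlt | heq | hlt
    · exact absurd (hmem hs₂ ha₂ hb₂).1 (hs₁.getVert_not_mem hc hT₁ hlt h₁₂)
    · exact heq
    · exact absurd (hmem hs₁ ha₁ hb₁).1 (hs₂.getVert_not_mem hc hT₂ hlt h₂₁)
  have hh : h₁ = h₂ := by
    rcases lt_trichotomy h₁ h₂ with hlt | heq | hlt
    · exact absurd (hmem hs₁ ha₁ hb₁).2 (hs₂.getVert_not_mem hc hT₂ (hl ▸ hs₁.lt) hlt)
    · exact heq
    · exact absurd (hmem hs₂ ha₂ hb₂).2 (hs₁.getVert_not_mem hc hT₁ (hl ▸ hs₂.lt) hlt)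
  rw [hs₁.mem_edges_iff, hs₂.mem_edges_iff, hl, hh]

end SimpleGraph.Walk

namespace LocalWheels

open Walk

variable {V : Type*} {G : SimpleGraph V} {wt : Sym2 V → ℕ} {u v : V}

theorem wlen_take_add_wlen_drop (p : G.Walk u v) (n : ℕ) :
    wlen wt (p.take n) + wlen wt (p.drop n) = wlen wt p := by
  simp only [wlen, edges_take, edges_drop, ← List.sum_append, ← List.map_append,
    List.take_append_drop]

theorem wlen_reverse (p : G.Walk u v) : wlen wt p.reverse = wlen wt p := by
  simp [wlen, List.sum_reverse]

theorem wlen_take_mono (p : G.Walk u v) {m n : ℕ} (hmn : m ≤ n) :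
    wlen wt (p.take m) ≤ wlen wt (p.take n) := by
  simp only [wlen, edges_take, List.map_take]
  exact (List.take_sublist_take_left hmn).sum_le_sum fun _ _ => Nat.zero_le _

theorem wlen_eq_wlen_take_or_wlen_drop {c : G.Walk v v} (hc : c.IsCycle) {i : ℕ} (hi : 0 < i)
    (hin : i < c.length) {S : G.Walk (c.getVert i) v} (hS : IsSubpathOf S c) :
    wlen wt S = wlen wt (c.take i) ∨ wlen wt S = wlen wt (c.drop i) := by
  rcases hc.edges_eq_reverse_take_or_drop hi hin hS.1 hS.2 with h | h
  · left
    simp [wlen, h, edges_take, List.sum_reverse]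
  · right
    simp [wlen, h, edges_drop]

theorem isSubpathOf_rotate [DecidableEq V] {o : G.Walk u u} (hv : v ∈ o.support) {a b : V}
    {Q : G.Walk a b} : IsSubpathOf Q (o.rotate v hv) ↔ IsSubpathOf Q o := by
  simp only [IsSubpathOf, (o.rotate_edges v hv).mem_iff]

namespace Theta

variable {r : ℕ∞} (θ : Theta G wt r) {a b : V} {Q : G.Walk a b}

theorem isBridgeArc_rotate [DecidableEq V] {o : G.Walk u u} (hv : v ∈ o.support) :
    θ.IsBridgeArc (o.rotate v hv) Q ↔ θ.IsBridgeArc o Q := by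
  simp only [IsBridgeArc, IsArc, isSubpathOf_rotate]

theorem primaryBridge_rotate [DecidableEq V] {o : G.Walk u u} (hv : v ∈ o.support) :
    θ.PrimaryBridge (o.rotate v hv) v Q ↔ θ.PrimaryBridge o v Q := by
  simp only [PrimaryBridge, isSubpathOf_rotate]

variable {θ}

theorem IsBranch.mem_support (hv : θ.IsBranch v) : v ∈ θ.support := by
  rcases hv with rfl | rfl
  exacts [⟨0, start_mem_support _⟩, ⟨0, end_mem_support _⟩]

theorem ne_of_interior_of_isBranch {i : Fin 3} (ha : θ.interior i a) (hv : θ.IsBranch v) :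
    a ≠ v := by
  rcases hv with rfl | rfl
  exacts [ha.2.1, ha.2.2]

theorem IsBridgeArc.exists_isSegment {c : G.Walk v v} (hc : c.IsCycle) (hv : θ.IsBranch v)
    (hQ : θ.IsBridgeArc c Q) : ∃ l h, c.IsSegment Q l h := by
  obtain ⟨⟨⟨hQp, hQc⟩, hQ0, -, -, hint⟩, _, _, -, ha, hb⟩ := hQ
  exact hc.exists_isSegment hQp hQc hQ0 fun hvQ =>
    hint v hvQ (ne_of_interior_of_isBranch ha hv).symm
      (ne_of_interior_of_isBranch hb hv).symm hv.mem_support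

theorem exists_shorter_of_not_primaryBridge {o : G.Walk u u} (hnp : ¬ θ.PrimaryBridge o v Q)
    {x : V} (hx : x = a ∨ x = b) {S : G.Walk x v} (hS : IsSubpathOf S o)
    (hQS : ∀ e ∈ Q.edges, e ∈ S.edges) :
    ∃ S' : G.Walk x v, IsSubpathOf S' o ∧ wlen wt S' < wlen wt S := by
  by_contra! h
  exact hnp ⟨x, hx, S, hS, h, hQS⟩

theorem two_mul_wlen_take_lt_of_not_primaryBridge {c : G.Walk v v} (hc : c.IsCycle) {l h : ℕ}
    (hs : c.IsSegment Q l h) (hnp : ¬ θ.PrimaryBridge c v Q) :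
    2 * wlen wt (c.take l) < wlen wt c ∧ wlen wt c < 2 * wlen wt (c.take h) := by
  have hn := hs.lt_length
  have hlh := hs.lt
  have hsplit_l := wlen_take_add_wlen_drop (wt := wt) c l
  have hsplit_h := wlen_take_add_wlen_drop (wt := wt) c h
  have hQ : ∀ e ∈ Q.edges, e ∈ c.edges.drop l ∧ e ∈ c.edges.take h := fun e he => by
    rw [hs.mem_edges_iff] at he
    refine ⟨List.mem_of_mem_take he, ?_⟩
    rw [List.take_drop, Nat.add_sub_cancel' hlh.le] at he
    exact List.mem_of_mem_drop he
  constructor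
  · obtain ⟨S', hS', hlt⟩ := exists_shorter_of_not_primaryBridge hnp
      hs.getVert_left (S := c.drop l)
      ⟨hc.isPath_drop hs.pos, fun e he => List.mem_of_mem_drop (edges_drop c l ▸ he)⟩
      fun e he => edges_drop c l ▸ (hQ e he).1
    rcases wlen_eq_wlen_take_or_wlen_drop (wt := wt) hc hs.pos (by omega) hS' with h | h <;> omega
  · obtain ⟨S', hS', hlt⟩ := exists_shorter_of_not_primaryBridge hnp
      hs.getVert_right (S := (c.take h).reverse)
      ⟨(hc.isPath_take hn).reverse, fun e he => by
        rw [edges_reverse, List.mem_reverse, edges_take] at he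
        exact List.mem_of_mem_take he⟩
      fun e he => by rw [edges_reverse, List.mem_reverse, edges_take]; exact (hQ e he).2
    rw [wlen_reverse] at hlt
    rcases wlen_eq_wlen_take_or_wlen_drop (wt := wt) hc (by omega) hn hS' with h | h <;> omega

theorem mem_edges_iff_of_not_primaryBridge {c : G.Walk v v} (hc : c.IsCycle)
    (hv : θ.IsBranch v) {a₁ b₁ a₂ b₂ : V} {Q₁ : G.Walk a₁ b₁} {Q₂ : G.Walk a₂ b₂}
    (hQ₁ : θ.IsBridgeArc c Q₁) (hQ₂ : θ.IsBridgeArc c Q₂) (hnp₁ : ¬ θ.PrimaryBridge c v Q₁)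
    (hnp₂ : ¬ θ.PrimaryBridge c v Q₂) (e : Sym2 V) : e ∈ Q₁.edges ↔ e ∈ Q₂.edges := by
  obtain ⟨l₁, h₁, hs₁⟩ := hQ₁.exists_isSegment hc hv
  obtain ⟨l₂, h₂, hs₂⟩ := hQ₂.exists_isSegment hc hv
  obtain ⟨hl₁, hh₁⟩ := two_mul_wlen_take_lt_of_not_primaryBridge hc hs₁ hnp₁
  obtain ⟨hl₂, hh₂⟩ := two_mul_wlen_take_lt_of_not_primaryBridge hc hs₂ hnp₂
  have h₁₂ : l₂ < h₁ := lt_of_not_ge fun hle => by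
    have := wlen_take_mono (wt := wt) c hle; omega
  have h₂₁ : l₁ < h₂ := lt_of_not_ge fun hle => by
    have := wlen_take_mono (wt := wt) c hle; omega
  obtain ⟨⟨-, -, ha₁, hb₁, hT₁⟩, -⟩ := hQ₁
  obtain ⟨⟨-, -, ha₂, hb₂, hT₂⟩, -⟩ := hQ₂
  exact hs₁.mem_edges_iff_of_overlap hc hs₂ ha₁ hb₁ hT₁ ha₂ hb₂ hT₂ h₁₂ h₂₁ e

end Theta

end LocalWheels

theorem LocalWheels.stmt14_general {V : Type*} [DecidableEq V]
    (G : SimpleGraph V) (wt : Sym2 V → ℕ) (r : ℕ∞)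
    (θ : LocalWheels.Theta G wt r) (u : V) (o : G.Walk u u) (ho : o.IsCycle)
    (vb : V) (hvb : θ.IsBranch vb) (hvbo : vb ∈ o.support) :
    ∀ (a₁ b₁ : V) (Q₁ : G.Walk a₁ b₁) (a₂ b₂ : V) (Q₂ : G.Walk a₂ b₂),
      θ.IsBridgeArc o Q₁ → θ.IsBridgeArc o Q₂ →
      ¬ θ.PrimaryBridge o vb Q₁ → ¬ θ.PrimaryBridge o vb Q₂ →
      {e | e ∈ Q₁.edges} = {e | e ∈ Q₂.edges} := by
  intro a₁ b₁ Q₁ a₂ b₂ Q₂ hQ₁ hQ₂ hnp₁ hnp₂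
  rw [← θ.isBridgeArc_rotate hvbo] at hQ₁ hQ₂
  rw [← θ.primaryBridge_rotate hvbo] at hnp₁ hnp₂
  ext e
  exact θ.mem_edges_iff_of_not_primaryBridge (ho.rotate hvbo) hvb hQ₁ hQ₂ hnp₁ hnp₂ e

/-- Let `θ` be a theta graph of parameter `r` in `G` and `o` a cycle of
length at most `r` containing a branching vertex `vb` of `θ`. Then at most one `θ`-bridge
included in `o` is secondary (not primary): there cannot be two secondary bridges. -/
theorem LocalWheels.stmt14 {V : Type*} [Fintype V] [DecidableEq V]
    (G : SimpleGraph V) (wt : Sym2 V → ℕ) (hw : LocalWheels.WeightPos G wt) (r : ℕ∞)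
    (θ : LocalWheels.Theta G wt r) (u : V) (o : G.Walk u u) (ho : o.IsCycle)
    (hor : (LocalWheels.wlen wt o : ℕ∞) ≤ r)
    (vb : V) (hvb : θ.IsBranch vb) (hvbo : vb ∈ o.support) :
    ∀ (a₁ b₁ : V) (Q₁ : G.Walk a₁ b₁) (a₂ b₂ : V) (Q₂ : G.Walk a₂ b₂),
      θ.IsBridgeArc o Q₁ → θ.IsBridgeArc o Q₂ →
      ¬ θ.PrimaryBridge o vb Q₁ → ¬ θ.PrimaryBridge o vb Q₂ →
      {e | e ∈ Q₁.edges} = {e | e ∈ Q₂.edges} :=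
  LocalWheels.stmt14_general G wt r θ u o ho vb hvb hvbo
end
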